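/- The bound r(p) ≤ k is attained: if p j = 0 for all j < k and p k ≥ 1, then r(p) = k. -/

import Mathlib

/-- The applause process of an audience `p`: `N 0 = p 0` and
`N (t+1) = ∑_{j=0}^{N t} p j`. -/
def applause (p : ℕ → ℕ) : ℕ → ℕ
  | 0 => p 0
  | t + 1 => ∑ j ∈ Finset.range (applause p t + 1), p j

/-- A standing ovation occurs for the audience `p` (supported on `[0,k]`)
iff the applause process reaches the total audience size. -/
def StandingOvation (k : ℕ) (p : ℕ → ℕ) : Prop :=
  ∃ t, applause p t = ∑ j ∈ Finset.range (k + 1), p j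

/-- `p` is `s`-soluble iff for every `1 ≤ s' ≤ s`, `∑_{j=0}^{s'-1} p j ≥ s'`. -/
def Soluble (s : ℕ) (p : ℕ → ℕ) : Prop :=
  ∀ s', 1 ≤ s' → s' ≤ s → s' ≤ ∑ j ∈ Finset.range s', p j

/-- `r(p)`: the least number `n` of invited friends (with shyness levels in `[0,k]`)
such that the augmented audience `p + q` produces a standing ovation. -/
noncomputable def ovationNumber (k : ℕ) (p : ℕ → ℕ) : ℕ :=
  sInf {n : ℕ | ∃ q : ℕ → ℕ, (∀ j, k < j → q j = 0) ∧
    (∑ j ∈ Finset.range (k + 1), q j) = n ∧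
    StandingOvation k (fun j => p j + q j)}

/-!
Inviting `k` friends of shyness `0` makes everybody stand after one round, so `r(p) ≤ k`.
Conversely, with `n < k` invited friends nobody of the original audience has shyness below
`k`, so at most `n` spectators have shyness at most `n`; the applause then never exceeds `n`,
while the augmented audience has more than `n` members.
-/

lemma applause_one (p : ℕ → ℕ) :
    applause p 1 = ∑ j ∈ Finset.range (p 0 + 1), p j := rfl

lemma sum_range_eq_of_forall_lt_eq_zero {k m : ℕ} {p : ℕ → ℕ} (hp : ∀ j, k < j → p j = 0)
    (hkm : k ≤ m) : ∑ j ∈ Finset.range (m + 1), p j = ∑ j ∈ Finset.range (k + 1), p j := by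
  refine (Finset.sum_subset (Finset.range_subset_range.mpr (by omega)) fun j hjm hjk => ?_).symm
  simp only [Finset.mem_range] at hjm hjk
  exact hp j (by omega)

lemma standingOvation_of_le_apply_zero {k : ℕ} {p : ℕ → ℕ} (hp : ∀ j, k < j → p j = 0)
    (h : k ≤ p 0) : StandingOvation k p :=
  ⟨1, by rw [applause_one, sum_range_eq_of_forall_lt_eq_zero hp h]⟩

lemma applause_le_of_sum_range_succ_le {n : ℕ} {p : ℕ → ℕ}
    (h : ∑ j ∈ Finset.range (n + 1), p j ≤ n) (t : ℕ) : applause p t ≤ n := by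
  induction t with
  | zero =>
    exact (Finset.single_le_sum (f := p) (fun _ _ => Nat.zero_le _)
      (Finset.mem_range.mpr n.succ_pos)).trans h
  | succ t ih =>
    exact (Finset.sum_le_sum_of_subset (Finset.range_subset_range.mpr (by omega))).trans h

lemma not_standingOvation_of_sum_range_succ_le {k n : ℕ} {p : ℕ → ℕ}
    (h : ∑ j ∈ Finset.range (n + 1), p j ≤ n) (hn : n < ∑ j ∈ Finset.range (k + 1), p j) :
    ¬ StandingOvation k p := by
  rintro ⟨t, ht⟩
  have := applause_le_of_sum_range_succ_le h t
  omega

theorem stmt_12 (k : ℕ) (p : ℕ → ℕ) (hp : ∀ j, k < j → p j = 0)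
    (hlow : ∀ j, j < k → p j = 0) (hk : 1 ≤ p k) :
    ovationNumber k p = k := by
  have hmem : k ∈ {n : ℕ | ∃ q : ℕ → ℕ, (∀ j, k < j → q j = 0) ∧
      (∑ j ∈ Finset.range (k + 1), q j) = n ∧
      StandingOvation k (fun j => p j + q j)} := by
    refine ⟨Pi.single 0 k, fun j hj => Pi.single_eq_of_ne (show j ≠ 0 by omega) _, by simp, ?_⟩
    refine standingOvation_of_le_apply_zero (fun j hj => ?_) (by simp)
    simp [hp j hj, Pi.single_eq_of_ne (show j ≠ 0 by omega)]
  refine le_antisymm (Nat.sInf_le hmem) (le_csInf ⟨k, hmem⟩ ?_)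
  rintro n ⟨q, -, hq, hov⟩
  by_contra! hn
  have hfew : ∑ j ∈ Finset.range (n + 1), (p j + q j) ≤ n := by
    rw [Finset.sum_add_distrib, Finset.sum_eq_zero fun j hj => hlow j (by simp at hj; omega),
      zero_add, ← hq]
    exact Finset.sum_le_sum_of_subset (Finset.range_subset_range.mpr (by omega))
  have hmany : p k ≤ ∑ j ∈ Finset.range (k + 1), p j :=
    Finset.single_le_sum (fun _ _ => Nat.zero_le _) (Finset.self_mem_range_succ k)
  exact not_standingOvation_of_sum_range_succ_le hfew
    (by rw [Finset.sum_add_distrib]; omega) hov
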